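/- arXiv:1410.7902 — 2 statements merged into one kernel-verified Lean document; each statement's English description precedes it below -/
import Mathlib

section
/- Let f : X → Y be a proper local homeomorphism between Hausdorff topological spaces. Then f has the path-lifting property: for every continuous α : [0,1] → Y and every x₀ ∈ X with f(x₀) = α(0), there exists a continuous α̃ : [0,1] → X with f ∘ α̃ = α and α̃(0) = x₀. -/
/-!
Let `K` be the image of the path. Properness makes `f ⁻¹' K` compact, and a local homeomorphism
from a compact Hausdorff space to a Hausdorff space is a (finite) covering map, so the
restriction `f ⁻¹' K → K` is a covering map and the path lifts along it.
-/

open Set Topology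

section

variable {X Y : Type*} [TopologicalSpace X] [TopologicalSpace Y] {f : X → Y}

theorem isLocalHomeomorph_of_isOpenMap_of_isLocallyInjective (hcont : Continuous f)
    (hopen : IsOpenMap f) (hinj : IsLocallyInjective f) : IsLocalHomeomorph f := by
  refine isLocalHomeomorph_iff_isOpenEmbedding_restrict.mpr fun x ↦ ?_
  obtain ⟨U, hU, hxU, hUinj⟩ := hinj x
  exact ⟨U, hU.mem_nhds hxU, isOpenEmbedding_iff_continuous_injective_isOpenMap.mpr
    ⟨hcont.comp continuous_subtype_val, hUinj.injective, hopen.domRestrict hU⟩⟩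

theorem IsLocalHomeomorph.restrictPreimage (hf : IsLocalHomeomorph f) (s : Set Y) :
    IsLocalHomeomorph (s.restrictPreimage f) := by
  refine isLocalHomeomorph_of_isOpenMap_of_isLocallyInjective
    hf.continuous.restrictPreimage (hf.isOpenMap.restrictPreimage s) fun x ↦ ?_
  obtain ⟨U, hU, hxU, hUinj⟩ := hf.isLocallyInjective x
  exact ⟨Subtype.val ⁻¹' U, hU.preimage continuous_subtype_val, hxU,
    fun a ha b hb hab ↦ Subtype.ext (hUinj ha hb (congrArg Subtype.val hab))⟩

theorem IsLocalHomeomorph.isCoveringMap_restrictPreimage [T2Space X] [T2Space Y]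
    (hf : IsLocalHomeomorph f) {K : Set Y} (hK : IsCompact (f ⁻¹' K)) :
    IsCoveringMap (K.restrictPreimage f) :=
  have := isCompact_iff_compactSpace.mp hK
  isLocalHomeomorph_iff_isCoveringMap.mp (hf.restrictPreimage K)

end

/-- A proper local homeomorphism between Hausdorff spaces has the path-lifting
property. -/
theorem path_lifting_of_proper {X Y : Type*} [TopologicalSpace X] [TopologicalSpace Y]
    [T2Space X] [T2Space Y]
    (f : X → Y) (hf : IsLocalHomeomorph f)
    (hproper : ∀ K : Set Y, IsCompact K → IsCompact (f ⁻¹' K)) :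
    ∀ α : unitInterval → Y, Continuous α → ∀ x₀ : X, f x₀ = α 0 →
      ∃ αt : unitInterval → X, Continuous αt ∧ f ∘ αt = α ∧ αt 0 = x₀ := by
  intro α hα x₀ hx₀
  have cov := hf.isCoveringMap_restrictPreimage (hproper _ (isCompact_range hα))
  obtain ⟨Γ, hΓ, hΓ0⟩ := cov.exists_path_lifts ⟨rangeFactorization α, hα.rangeFactorization⟩
    ⟨x₀, ⟨0, hx₀.symm⟩⟩ (Subtype.ext hx₀.symm)
  exact ⟨Subtype.val ∘ Γ, continuous_subtype_val.comp Γ.continuous,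
    funext fun t ↦ congrArg Subtype.val (congrFun hΓ t), congrArg Subtype.val hΓ0⟩
end

section
/- Let X and Y be Banach spaces, let D ⊆ X be a nonempty open connected set, let x₀ ∈ D, set y₀ = f(x₀), and let f : D → Y be a local homeomorphism. Then there exist an open set D_Φ ⊆ D × ℝ and a continuous map Φ : D_Φ → D such that: for every x ∈ D the set I_x := {t ∈ ℝ : (x,t) ∈ D_Φ} is an interval containing 0; Φ(x,0) = x for all x ∈ D; whenever (x,t₁) ∈ D_Φ and (x,t₁+t₂) ∈ D_Φ one has (Φ(x,t₁),t₂) ∈ D_Φ and Φ(Φ(x,t₁),t₂) = Φ(x,t₁+t₂); f(Φ(x,t)) = y₀ + e^{-t}(f(x) − y₀) for all (x,t) ∈ D_Φ; and Φ is maximal, meaning that for every x ∈ D and every continuous ψ : J → D on an interval J containing 0 with ψ(0) = x and f(ψ(t)) = y₀ + e^{-t}(f(x) − y₀) for all t ∈ J, one has J ⊆ I_x and ψ(t) = Φ(x,t) for t ∈ J. -/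
/-!
The curves `t ↦ y₀ + e^{-t} (f x - y₀)` are the orbits of a flow on `Y`, and `Φ` is its lift
through `f`. Two lifts of the same path that agree at one time agree on every interval, so
`Φ(x, t)` is the value at `t` of any lift of the orbit of `f x` starting at `x` along `[0, t]`,
and the domain collects all such `(x, t)`; maximality, the flow law (the orbits of a flow are
invariant under time translation) and the lifting identity follow at once. Openness of the domain
and continuity of `Φ` come from a connectedness argument along `[0, t]`: whether `Φ(·, r)` is
defined and continuous near `x` is locally constant in `r`, because near `Φ(x, r)` a chart of `f`
and the tube lemma write `Φ` as the inverse chart composed with the orbit map, jointly in both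
variables.
-/

open Set Filter

/-- `f : D → Y` is a local homeomorphism on the open set `D` if every point of `D` has an
open neighbourhood `U ⊆ D` such that `f(U)` is open and `f|U : U → f(U)` is a
homeomorphism. -/
def IsLocalHomeoOn {X Y : Type*} [TopologicalSpace X] [TopologicalSpace Y]
    (f : X → Y) (D : Set X) : Prop :=
  ∀ x ∈ D, ∃ U : Set X, U ⊆ D ∧ IsOpen U ∧ x ∈ U ∧ IsOpen (f '' U) ∧
    ContinuousOn f U ∧ ∃ g : Y → X, ContinuousOn g (f '' U) ∧
      (∀ u ∈ U, g (f u) = u) ∧ ∀ y ∈ f '' U, g y ∈ U ∧ f (g y) = y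

/-- The maximal auxiliary flow `Φ : D_Φ → D` for a map `f : D → Y` at the point `x₀`:
`D_Φ ⊆ D × ℝ` is open, each section `I_x = {t : (x,t) ∈ D_Φ}` is an interval containing
`0`, `Φ(x,0) = x`, the flow law `Φ(Φ(x,t₁),t₂) = Φ(x,t₁+t₂)` holds,
`f(Φ(x,t)) = f(x₀) + e^{-t}(f(x) - f(x₀))` on `D_Φ`, and `Φ` is maximal among such
liftings. -/
structure AuxFlow {X Y : Type*} [NormedAddCommGroup X] [NormedSpace ℝ X]
    [NormedAddCommGroup Y] [NormedSpace ℝ Y]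
    (D : Set X) (f : X → Y) (x₀ : X) where
  dom : Set (X × ℝ)
  flow : X → ℝ → X
  isOpen_dom : IsOpen dom
  dom_subset : ∀ p ∈ dom, p.1 ∈ D
  zero_mem : ∀ x ∈ D, (x, (0 : ℝ)) ∈ dom
  interval : ∀ x ∈ D, Set.OrdConnected {t : ℝ | (x, t) ∈ dom}
  mem_of_dom : ∀ p ∈ dom, flow p.1 p.2 ∈ D
  continuousOn : ContinuousOn (fun p : X × ℝ => flow p.1 p.2) dom
  flow_zero : ∀ x ∈ D, flow x 0 = x
  flow_add : ∀ (x : X) (t₁ t₂ : ℝ), (x, t₁) ∈ dom → (x, t₁ + t₂) ∈ dom →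
    (flow x t₁, t₂) ∈ dom ∧ flow (flow x t₁) t₂ = flow x (t₁ + t₂)
  lifts : ∀ p ∈ dom, f (flow p.1 p.2) = f x₀ + Real.exp (-p.2) • (f p.1 - f x₀)
  maximal : ∀ x ∈ D, ∀ J : Set ℝ, J.OrdConnected → (0 : ℝ) ∈ J →
    ∀ ψ : ℝ → X, ContinuousOn ψ J → ψ 0 = x →
    (∀ t ∈ J, ψ t ∈ D ∧ f (ψ t) = f x₀ + Real.exp (-t) • (f x - f x₀)) →
    ∀ t ∈ J, (x, t) ∈ dom ∧ ψ t = flow x t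

open Topology Metric Function

section Lifts

variable {T X Y : Type*} [TopologicalSpace T] [TopologicalSpace X] {f : X → Y} {D : Set X}

def IsLiftOn (f : X → Y) (D : Set X) (c : T → Y) (ψ : T → X) (J : Set T) : Prop :=
  ContinuousOn ψ J ∧ ∀ s ∈ J, ψ s ∈ D ∧ f (ψ s) = c s

theorem IsLiftOn.mono {c : T → Y} {ψ : T → X} {J K : Set T} (h : IsLiftOn f D c ψ J)
    (hKJ : K ⊆ J) : IsLiftOn f D c ψ K :=
  ⟨h.1.mono hKJ, fun s hs => h.2 s (hKJ hs)⟩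

theorem IsLiftOn.congr {c : T → Y} {ψ ψ' : T → X} {J : Set T} (h : IsLiftOn f D c ψ J)
    (he : EqOn ψ' ψ J) : IsLiftOn f D c ψ' J :=
  ⟨h.1.congr he, fun s hs => he hs ▸ h.2 s hs⟩

theorem IsLiftOn.piecewise {c : T → Y} {ψ₁ ψ₂ : T → X} {A B : Set T}
    [∀ j, Decidable (j ∈ A)] (h₁ : IsLiftOn f D c ψ₁ A) (h₂ : IsLiftOn f D c ψ₂ B)
    (hA : IsClosed A) (hB : IsClosed B) (he : EqOn ψ₁ ψ₂ (A ∩ B)) :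
    IsLiftOn f D c (A.piecewise ψ₁ ψ₂) (A ∪ B) ∧ EqOn (A.piecewise ψ₁ ψ₂) ψ₂ B := by
  have heB : EqOn (A.piecewise ψ₁ ψ₂) ψ₂ B := fun s hs => by
    by_cases hsA : s ∈ A
    · rw [piecewise_eq_of_mem _ _ _ hsA, he ⟨hsA, hs⟩]
    · rw [piecewise_eq_of_notMem _ _ _ hsA]
  have hA' := h₁.congr (piecewise_eqOn A ψ₁ ψ₂)
  have hB' := h₂.congr heB
  exact ⟨⟨hA'.1.union_of_isClosed hB'.1 hA hB, fun s hs => hs.elim (hA'.2 s) (hB'.2 s)⟩, heB⟩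

variable [TopologicalSpace Y]

theorem IsLocalHomeoOn.isOpen (hf : IsLocalHomeoOn f D) : IsOpen D :=
  isOpen_iff_forall_mem_open.2 fun x hx =>
    let ⟨U, hUD, hUo, hxU, _⟩ := hf x hx
    ⟨U, hUD, hUo, hxU⟩

theorem IsLocalHomeoOn.continuousOn (hf : IsLocalHomeoOn f D) : ContinuousOn f D := by
  intro x hx
  obtain ⟨U, -, hUo, hxU, -, hfU, -⟩ := hf x hx
  exact (hfU.continuousAt (hUo.mem_nhds hxU)).continuousWithinAt

theorem isLiftOn_comp_of_mapsTo {W : Set X} {g : Y → X} (hWD : W ⊆ D)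
    (hgc : ContinuousOn g (f '' W)) (hg : ∀ y ∈ f '' W, g y ∈ W ∧ f (g y) = y)
    {c : T → Y} {J : Set T} (hc : ContinuousOn c J) (hcJ : MapsTo c J (f '' W)) :
    IsLiftOn f D c (g ∘ c) J :=
  ⟨hgc.comp hc hcJ, fun _ hs => ⟨hWD (hg _ (hcJ hs)).1, (hg _ (hcJ hs)).2⟩⟩

/-- Local injectivity of `f` makes the coincidence set of two lifts open. -/
theorem IsLocalHomeoOn.eqOn_of_isLiftOn [T2Space X] (hf : IsLocalHomeoOn f D)
    {c : T → Y} {ψ₁ ψ₂ : T → X} {J : Set T} (hJ : IsPreconnected J)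
    (h₁ : IsLiftOn f D c ψ₁ J) (h₂ : IsLiftOn f D c ψ₂ J) {s₀ : T} (hs₀ : s₀ ∈ J)
    (he : ψ₁ s₀ = ψ₂ s₀) : EqOn ψ₁ ψ₂ J := by
  have := Subtype.preconnectedSpace hJ
  have hc₁ : Continuous (J.domRestrict ψ₁) := continuousOn_iff_continuous_domRestrict.mp h₁.1
  have hc₂ : Continuous (J.domRestrict ψ₂) := continuousOn_iff_continuous_domRestrict.mp h₂.1
  have hopen : IsOpen {s : J | ψ₁ s = ψ₂ s} := by
    refine isOpen_iff_mem_nhds.2 fun s (hs : ψ₁ s = ψ₂ s) => ?_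
    obtain ⟨U, -, hUo, hsU, -, -, g, -, hgf, -⟩ := hf (ψ₁ s) (h₁.2 s s.2).1
    filter_upwards [hc₁.continuousAt.preimage_mem_nhds (hUo.mem_nhds hsU),
      hc₂.continuousAt.preimage_mem_nhds (hUo.mem_nhds (hs ▸ hsU : ψ₂ s ∈ U))]
      with r (hr₁ : ψ₁ r ∈ U) (hr₂ : ψ₂ r ∈ U)
    rw [← hgf _ hr₁, ← hgf _ hr₂, (h₁.2 r r.2).2, (h₂.2 r r.2).2]
  have huniv := IsClopen.eq_univ ⟨isClosed_eq hc₁ hc₂, hopen⟩ ⟨⟨s₀, hs₀⟩, he⟩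
  exact fun s hs => eq_univ_iff_forall.1 huniv ⟨s, hs⟩

end Lifts

section LiftedFlow

variable {X Y : Type*} [TopologicalSpace X] [TopologicalSpace Y] {f : X → Y} {D : Set X}
  {ϕ : Flow ℝ Y}

def liftDom (f : X → Y) (D : Set X) (ϕ : Flow ℝ Y) : Set (X × ℝ) :=
  {p | ∃ ψ : ℝ → X, ψ 0 = p.1 ∧ IsLiftOn f D (fun s => ϕ s (f p.1)) ψ (uIcc 0 p.2)}

open Classical in
noncomputable def liftFlow (f : X → Y) (D : Set X) (ϕ : Flow ℝ Y) (x : X) (t : ℝ) : X :=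
  if h : (x, t) ∈ liftDom f D ϕ then h.choose t else x

theorem fst_mem_of_mem_liftDom {p : X × ℝ} (hp : p ∈ liftDom f D ϕ) : p.1 ∈ D :=
  let ⟨_, hψ0, hψ⟩ := hp
  hψ0 ▸ (hψ.2 0 left_mem_uIcc).1

theorem ContinuousAt.flow_apply {x : X} (hfx : ContinuousAt f x) (s : ℝ) :
    ContinuousAt (fun p : X × ℝ => ϕ p.2 (f p.1)) (x, s) :=
  ϕ.cont'.continuousAt.comp (continuousAt_snd.prodMk (hfx.comp continuousAt_fst))

theorem ContinuousAt.eventually_forall_flow_mem {x : X} (hfx : ContinuousAt f x) {K : Set ℝ}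
    (hK : IsCompact K) {O : Set Y} (hO : IsOpen O) (hKO : ∀ s ∈ K, ϕ s (f x) ∈ O) :
    ∀ᶠ x' in 𝓝 x, ∀ s ∈ K, ϕ s (f x') ∈ O :=
  hK.eventually_forall_of_forall_eventually fun s hs =>
    (hfx.flow_apply s).preimage_mem_nhds (hO.mem_nhds (hKO s hs))

variable [T2Space X]

theorem IsLocalHomeoOn.liftFlow_eq_of_isLiftOn (hf : IsLocalHomeoOn f D) {x : X} {ψ : ℝ → X}
    {J : Set ℝ} (hJ : J.OrdConnected) (hJ0 : 0 ∈ J) (hψ0 : ψ 0 = x)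
    (hψ : IsLiftOn f D (fun s => ϕ s (f x)) ψ J) {t : ℝ} (ht : t ∈ J) :
    (x, t) ∈ liftDom f D ϕ ∧ liftFlow f D ϕ x t = ψ t := by
  have hsub : uIcc 0 t ⊆ J := hJ.uIcc_subset hJ0 ht
  have hmem : (x, t) ∈ liftDom f D ϕ := ⟨ψ, hψ0, hψ.mono hsub⟩
  obtain ⟨hψ'0, hψ'⟩ := hmem.choose_spec
  refine ⟨hmem, ?_⟩
  rw [liftFlow, dif_pos hmem]
  exact hf.eqOn_of_isLiftOn isPreconnected_uIcc hψ' (hψ.mono hsub) left_mem_uIcc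
    (hψ'0.trans hψ0.symm) right_mem_uIcc

theorem IsLocalHomeoOn.liftFlow_zero (hf : IsLocalHomeoOn f D) {x : X} (hx : x ∈ D) :
    (x, 0) ∈ liftDom f D ϕ ∧ liftFlow f D ϕ x 0 = x :=
  hf.liftFlow_eq_of_isLiftOn (ψ := fun _ => x) ordConnected_singleton rfl rfl
    ⟨continuousOn_const, fun s hs => ⟨hx, by
      rw [mem_singleton_iff.1 hs]
      exact (ϕ.map_zero_apply _).symm⟩⟩ rfl

theorem IsLocalHomeoOn.isLiftOn_liftFlow (hf : IsLocalHomeoOn f D) {x : X} {t : ℝ}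
    (h : (x, t) ∈ liftDom f D ϕ) :
    IsLiftOn f D (fun s => ϕ s (f x)) (liftFlow f D ϕ x) (uIcc 0 t) :=
  let ⟨_, hψ0, hψ⟩ := h
  hψ.congr fun _ hs => (hf.liftFlow_eq_of_isLiftOn ordConnected_uIcc left_mem_uIcc hψ0 hψ hs).2

theorem IsLocalHomeoOn.liftFlow_mem_and_apply (hf : IsLocalHomeoOn f D) {x : X} {t : ℝ}
    (h : (x, t) ∈ liftDom f D ϕ) :
    liftFlow f D ϕ x t ∈ D ∧ f (liftFlow f D ϕ x t) = ϕ t (f x) :=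
  (hf.isLiftOn_liftFlow h).2 t right_mem_uIcc

theorem IsLocalHomeoOn.ordConnected_liftDom_section (hf : IsLocalHomeoOn f D) {x : X}
    (hx : x ∈ D) : {t | (x, t) ∈ liftDom f D ϕ}.OrdConnected :=
  (ordConnected_iff_uIcc_subset_left (s := {t | (x, t) ∈ liftDom f D ϕ})
    (hf.liftFlow_zero hx).1).2 fun _ ⟨_, hψ0, hψ⟩ _ hs =>
    (hf.liftFlow_eq_of_isLiftOn ordConnected_uIcc left_mem_uIcc hψ0 hψ hs).1

theorem IsLocalHomeoOn.liftFlow_eq_of_mapsTo (hf : IsLocalHomeoOn f D) {W : Set X} {g : Y → X}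
    (hWD : W ⊆ D) (hgc : ContinuousOn g (f '' W)) (hgf : ∀ w ∈ W, g (f w) = w)
    (hg : ∀ y ∈ f '' W, g y ∈ W ∧ f (g y) = y) {x : X} {r s : ℝ}
    (hr : (x, r) ∈ liftDom f D ϕ) (hrW : liftFlow f D ϕ x r ∈ W)
    (hW : MapsTo (fun u => ϕ u (f x)) (uIcc r s) (f '' W)) :
    (x, s) ∈ liftDom f D ϕ ∧ liftFlow f D ϕ x s = g (ϕ s (f x)) := by
  classical
  have h₁ := hf.isLiftOn_liftFlow hr
  have h₂ := isLiftOn_comp_of_mapsTo hWD hgc hg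
    (ϕ.continuous continuous_id continuous_const).continuousOn hW
  have hr' : liftFlow f D ϕ x r = g (ϕ r (f x)) :=
    (hgf _ hrW).symm.trans (congrArg g (h₁.2 r right_mem_uIcc).2)
  have he := hf.eqOn_of_isLiftOn (ordConnected_uIcc.inter ordConnected_uIcc).isPreconnected
    (h₁.mono inter_subset_left) (h₂.mono inter_subset_right)
    ⟨right_mem_uIcc, left_mem_uIcc⟩ hr'
  obtain ⟨hglue, hglue₂⟩ := h₁.piecewise h₂ isClosed_Icc isClosed_Icc he
  have hglue0 : (uIcc 0 r).piecewise (liftFlow f D ϕ x) (g ∘ fun u => ϕ u (f x)) 0 = x := by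
    rw [piecewise_eq_of_mem _ _ _ left_mem_uIcc,
      (hf.liftFlow_zero (fst_mem_of_mem_liftDom hr)).2]
  obtain ⟨hmem, heq⟩ := hf.liftFlow_eq_of_isLiftOn ordConnected_uIcc left_mem_uIcc hglue0
    (hglue.mono uIcc_subset_uIcc_union_uIcc) right_mem_uIcc
  exact ⟨hmem, heq.trans (hglue₂ right_mem_uIcc)⟩

theorem IsLocalHomeoOn.exists_forall_ball_liftFlow (hf : IsLocalHomeoOn f D) {x : X} {t m : ℝ}
    (ht : (x, t) ∈ liftDom f D ϕ) (hm : m ∈ uIcc 0 t) :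
    ∃ δ > 0, ∀ r ∈ uIcc 0 t ∩ ball m δ, (∀ᶠ x' in 𝓝 x, (x', r) ∈ liftDom f D ϕ) →
      ContinuousAt (liftFlow f D ϕ · r) x → ∀ s ∈ ball m δ,
        liftDom f D ϕ ∈ 𝓝 (x, s) ∧ ContinuousAt (uncurry (liftFlow f D ϕ)) (x, s) := by
  have hψ := hf.isLiftOn_liftFlow ht
  obtain ⟨W, hWD, hWo, hmW, hfWo, -, g, hgc, hgf, hg⟩ := hf _ (hψ.2 m hm).1
  have hfx : ContinuousAt f x :=
    hf.continuousOn.continuousAt (hf.isOpen.mem_nhds (fst_mem_of_mem_liftDom ht))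
  have hγm : ϕ m (f x) ∈ f '' W := ⟨_, hmW, (hψ.2 m hm).2⟩
  obtain ⟨δ₁, hδ₁, hW₁⟩ := Metric.mem_nhdsWithin_iff.1 (hψ.1 m hm (hWo.mem_nhds hmW))
  obtain ⟨δ₂, hδ₂, hW₂⟩ := Metric.mem_nhds_iff.1
    ((ϕ.continuous continuous_id continuous_const).continuousAt.preimage_mem_nhds
      (hfWo.mem_nhds hγm))
  set δ := min δ₁ δ₂ / 2
  have hδ : 0 < δ := by positivity
  have hδ₁' : ball m δ ⊆ ball m δ₁ := ball_subset_ball (by grind)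
  have hδ₂' : closedBall m δ ⊆ ball m δ₂ := closedBall_subset_ball (by grind)
  have htube := hfx.eventually_forall_flow_mem (ϕ := ϕ) (isCompact_closedBall m δ) hfWo
    fun s hs => hW₂ (hδ₂' hs)
  refine ⟨δ, hδ, fun r ⟨hrt, hrm⟩ hr hrc s hs => ?_⟩
  have hrW : liftFlow f D ϕ x r ∈ W := hW₁ ⟨hδ₁' hrm, hrt⟩
  have hchart : ∀ᶠ p in 𝓝 (x, s),
      p ∈ liftDom f D ϕ ∧ liftFlow f D ϕ p.1 p.2 = g (ϕ p.2 (f p.1)) := by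
    have hnear := hr.and ((hrc.eventually_mem (hWo.mem_nhds hrW)).and htube)
    filter_upwards [prod_mem_nhds hnear (isOpen_ball.mem_nhds hs)]
      with ⟨x', s'⟩ ⟨⟨hr', hrW', hγ'⟩, hs'⟩
    refine hf.liftFlow_eq_of_mapsTo hWD hgc hgf hg hr' hrW' fun u hu => hγ' u ?_
    exact (convex_closedBall m δ).ordConnected.uIcc_subset (ball_subset_closedBall hrm)
      (ball_subset_closedBall hs') hu
  have hgγ : ContinuousAt (fun p : X × ℝ => g (ϕ p.2 (f p.1))) (x, s) := by
    have hγs : ϕ s (f x) ∈ f '' W := hW₂ (hδ₂' (ball_subset_closedBall hs))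
    exact (hgc.continuousAt (hfWo.mem_nhds hγs)).comp_of_eq (hfx.flow_apply s) rfl
  exact ⟨hchart.mono fun _ => And.left, hgγ.congr (hchart.mono fun _ h => h.2.symm)⟩

/-- The times `r ∈ [0, t]` at which `liftFlow · r` is defined near `x` and continuous at `x`
contain `0` and, by `exists_forall_ball_liftFlow`, form a relatively clopen subset of `[0, t]`. -/
theorem IsLocalHomeoOn.liftDom_mem_nhds_and_continuousAt (hf : IsLocalHomeoOn f D)
    {p : X × ℝ} (hp : p ∈ liftDom f D ϕ) :
    liftDom f D ϕ ∈ 𝓝 p ∧ ContinuousAt (uncurry (liftFlow f D ϕ)) p := by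
  obtain ⟨x, t⟩ := p
  let P : ℝ → Prop := fun r =>
    (∀ᶠ x' in 𝓝 x, (x', r) ∈ liftDom f D ϕ) ∧ ContinuousAt (liftFlow f D ϕ · r) x
  have hP : ∀ r, liftDom f D ϕ ∈ 𝓝 (x, r) ∧ ContinuousAt (uncurry (liftFlow f D ϕ)) (x, r) →
      P r := fun r ⟨hr, hrc⟩ =>
    ⟨(continuous_id.prodMk continuous_const).continuousAt.preimage_mem_nhds hr,
      hrc.comp (f := fun x' => (x', r)) (continuousAt_id.prodMk continuousAt_const)⟩
  have hP0 : P 0 := by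
    have h0 : ∀ᶠ x' in 𝓝 x, (x', 0) ∈ liftDom f D ϕ ∧ liftFlow f D ϕ x' 0 = x' :=
      (hf.isOpen.eventually_mem (fst_mem_of_mem_liftDom hp)).mono fun _ => hf.liftFlow_zero
    exact ⟨h0.mono fun _ => And.left, continuousAt_id.congr (h0.mono fun _ h => h.2.symm)⟩
  have hPt : P t := by
    refine isPreconnected_uIcc.induction₂' (fun a b => P a → P b) (fun m hm => ?_)
      (fun _ _ _ _ _ _ hab hbc => hbc ∘ hab) left_mem_uIcc right_mem_uIcc hP0
    obtain ⟨δ, hδ, hstep⟩ := hf.exists_forall_ball_liftFlow hp hm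
    filter_upwards [self_mem_nhdsWithin, nhdsWithin_le_nhds (ball_mem_nhds m hδ)] with r hrt hrm
    exact ⟨fun hPm => hP r (hstep m ⟨hm, mem_ball_self hδ⟩ hPm.1 hPm.2 r hrm),
      fun hPr => hP m (hstep r ⟨hrt, hrm⟩ hPr.1 hPr.2 m (mem_ball_self hδ))⟩
  obtain ⟨δ, hδ, hstep⟩ := hf.exists_forall_ball_liftFlow hp right_mem_uIcc
  exact hstep t ⟨right_mem_uIcc, mem_ball_self hδ⟩ hPt.1 hPt.2 t (mem_ball_self hδ)

theorem IsLocalHomeoOn.isOpen_liftDom (hf : IsLocalHomeoOn f D) : IsOpen (liftDom f D ϕ) :=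
  isOpen_iff_mem_nhds.2 fun _ hp => (hf.liftDom_mem_nhds_and_continuousAt hp).1

theorem IsLocalHomeoOn.continuousOn_liftFlow (hf : IsLocalHomeoOn f D) :
    ContinuousOn (uncurry (liftFlow f D ϕ)) (liftDom f D ϕ) :=
  fun _ hp => (hf.liftDom_mem_nhds_and_continuousAt hp).2.continuousWithinAt

theorem IsLocalHomeoOn.liftFlow_add (hf : IsLocalHomeoOn f D) {x : X} {t₁ t₂ : ℝ}
    (h₁ : (x, t₁) ∈ liftDom f D ϕ) (h₂ : (x, t₁ + t₂) ∈ liftDom f D ϕ) :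
    (liftFlow f D ϕ x t₁, t₂) ∈ liftDom f D ϕ ∧
      liftFlow f D ϕ (liftFlow f D ϕ x t₁) t₂ = liftFlow f D ϕ x (t₁ + t₂) := by
  have hmem : MapsTo (fun s => (x, t₁ + s)) (uIcc 0 t₂) (liftDom f D ϕ) := fun s hs =>
    (hf.ordConnected_liftDom_section (fst_mem_of_mem_liftDom h₁)).uIcc_subset h₁ h₂
      (by simpa only [image_const_add_uIcc, add_zero] using mem_image_of_mem (t₁ + ·) hs)
  have hlift : IsLiftOn f D (fun s => ϕ s (f (liftFlow f D ϕ x t₁)))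
      (fun s => liftFlow f D ϕ x (t₁ + s)) (uIcc 0 t₂) := by
    refine ⟨hf.continuousOn_liftFlow.comp (by fun_prop) hmem, fun s hs => ?_⟩
    obtain ⟨hD, hfs⟩ := hf.liftFlow_mem_and_apply (hmem hs)
    refine ⟨hD, hfs.trans ?_⟩
    change ϕ (t₁ + s) (f x) = ϕ s (f (liftFlow f D ϕ x t₁))
    rw [(hf.liftFlow_mem_and_apply h₁).2, ← ϕ.map_add, add_comm]
  exact hf.liftFlow_eq_of_isLiftOn ordConnected_uIcc left_mem_uIcc (by rw [add_zero]) hlift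
    right_mem_uIcc

end LiftedFlow

/-- The flow of `y' = y₀ - y`. -/
noncomputable def contractionFlow {Y : Type*} [NormedAddCommGroup Y] [NormedSpace ℝ Y]
    (y₀ : Y) : Flow ℝ Y where
  toFun t y := y₀ + Real.exp (-t) • (y - y₀)
  cont' := by fun_prop
  map_add' t₁ t₂ y := by
    rw [add_sub_cancel_left, smul_smul, ← Real.exp_add, neg_add, add_comm (-t₁)]
  map_zero' y := by simp

theorem auxFlow_exists_general {X Y : Type*}
    [NormedAddCommGroup X] [NormedSpace ℝ X]
    [NormedAddCommGroup Y] [NormedSpace ℝ Y]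
    (D : Set X) (f : X → Y) (hf : IsLocalHomeoOn f D) (x₀ : X) :
    Nonempty (AuxFlow D f x₀) :=
  let ϕ := contractionFlow (f x₀)
  ⟨{ dom := liftDom f D ϕ
     flow := liftFlow f D ϕ
     isOpen_dom := hf.isOpen_liftDom
     dom_subset := fun _ => fst_mem_of_mem_liftDom
     zero_mem := fun _ hx => (hf.liftFlow_zero hx).1
     interval := fun _ => hf.ordConnected_liftDom_section
     mem_of_dom := fun _ hp => (hf.liftFlow_mem_and_apply hp).1
     continuousOn := hf.continuousOn_liftFlow
     flow_zero := fun _ hx => (hf.liftFlow_zero hx).2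
     flow_add := fun _ _ _ => hf.liftFlow_add
     lifts := fun _ hp => (hf.liftFlow_mem_and_apply hp).2
     maximal := fun _ _ _ hJ hJ0 _ hψc hψ0 hψ _ ht =>
       (hf.liftFlow_eq_of_isLiftOn hJ hJ0 hψ0 ⟨hψc, hψ⟩ ht).imp_right Eq.symm }⟩

/-- Existence and uniqueness-as-maximality of the auxiliary flow for a local
homeomorphism `f : D → Y` on a nonempty open connected subset of a Banach space. -/
theorem auxFlow_exists {X Y : Type*}
    [NormedAddCommGroup X] [NormedSpace ℝ X] [CompleteSpace X]
    [NormedAddCommGroup Y] [NormedSpace ℝ Y] [CompleteSpace Y]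
    (D : Set X) (hDopen : IsOpen D) (hDne : D.Nonempty) (hDconn : IsConnected D)
    (f : X → Y) (hf : IsLocalHomeoOn f D) (x₀ : X) (hx₀ : x₀ ∈ D) :
    Nonempty (AuxFlow D f x₀) :=
  auxFlow_exists_general D f hf x₀
end
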